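/- For every s ≥ 0, the lowest eigenvalue μ_π(s) of the twisted operator T̂_π^s is strictly greater than 1/4: if v ∈ H¹(Ω) ∩ L²(Ω, y_1² dy) vanishes on Γ_π^D and satisfies Ĵ_π^s[v] = (1/4)‖v‖², then v = 0. -/

import Mathlib

open Real MeasureTheory

/-- Partial derivative in the first variable. -/
noncomputable def pd1 (f : ℝ × ℝ → ℝ) (p : ℝ × ℝ) : ℝ := deriv (fun t => f (t, p.2)) p.1

/-- Partial derivative in the second variable. -/
noncomputable def pd2 (f : ℝ × ℝ → ℝ) (p : ℝ × ℝ) : ℝ := deriv (fun t => f (p.1, t)) p.2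

/-- The strip `Ω = ℝ × (-a,a)`. -/
def strip (a : ℝ) : Set (ℝ × ℝ) := Set.univ ×ˢ Set.Ioo (-a) a

/-- The quadratic form
`Ĵ^s[v] = ‖∂₁v‖² + (1/16)‖y₁v‖² + e^s‖∂₂v‖² - E₁e^s‖v‖²` on the strip. -/
noncomputable def Jhat (a s : ℝ) (v : ℝ × ℝ → ℝ) : ℝ :=
  (∫ p in strip a, (pd1 v p) ^ 2) + (1 / 16) * (∫ p in strip a, (p.1 * v p) ^ 2)
    + Real.exp s * (∫ p in strip a, (pd2 v p) ^ 2)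
    - (π / (4 * a)) ^ 2 * Real.exp s * (∫ p in strip a, (v p) ^ 2)

/-!
Completing the square in `y₁` around the oscillator ground state `exp (-y₁² / 8)` gives
`‖∂₁v‖² + ‖y₁v‖² / 16 - ‖v‖² / 4 = ‖∂₁v + y₁v / 4‖²`. On each slice `y₁ ≠ 0` the function
`v (y₁, ·)` vanishes at one end of `[-a, a]`, so the sharp mixed Poincaré inequality gives
`‖∂₂v‖² ≥ E₁‖v‖²`. Hence `Ĵ[v] - ‖v‖² / 4` is a sum of two nonnegative terms. If it vanishes, then
`∂₁v + y₁v / 4 = 0`, so `v = exp (-y₁² / 8) g (y₂)`; the conditions on the two halves of the boundary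
force `g (-a) = g a = 0`, and the Dirichlet Poincaré inequality `‖g'‖² ≥ 4E₁‖g‖²` contradicts
`‖g'‖² ≤ E₁‖g‖²` unless `g = 0`.
-/

open Set

theorem integral_Ioo_eq_intervalIntegral {a b : ℝ} (hab : a ≤ b) (f : ℝ → ℝ) :
    ∫ x in Ioo a b, f x = ∫ x in a..b, f x := by
  rw [intervalIntegral.integral_of_le hab, integral_Ioc_eq_integral_Ioo]

theorem eqOn_zero_of_setIntegral_sq_eq_zero {X : Type*} [TopologicalSpace X]
    [MeasurableSpace X] {μ : Measure X} [μ.IsOpenPosMeasure] {f : X → ℝ} {U : Set X}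
    (hU : IsOpen U) (hf : ContinuousOn f U) (hint : IntegrableOn (fun x => f x ^ 2) U μ)
    (h : ∫ x in U, f x ^ 2 ∂μ = 0) : EqOn f 0 U := fun _ hx =>
  pow_eq_zero_iff two_ne_zero |>.1 <| Measure.eqOn_open_of_ae_eq
    ((integral_eq_zero_iff_of_nonneg (fun _ => sq_nonneg _) hint).1 h) hU (hf.pow 2)
    continuousOn_const hx

theorem eq_mul_exp_of_hasDerivAt {f : ℝ → ℝ} {c : ℝ}
    (hf : ∀ t, HasDerivAt f (-(c * (t * f t))) t) (t : ℝ) :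
    f t = f 0 * exp (-(c / 2 * t ^ 2)) := by
  have hF : ∀ t, HasDerivAt (fun t => f t * exp (c / 2 * t ^ 2)) 0 t := fun t => by
    have := (hf t).fun_mul ((((hasDerivAt_id' t).fun_pow 2).const_mul (c / 2)).exp)
    refine this.congr_deriv ?_
    norm_num
    ring
  have := is_const_of_deriv_eq_zero (fun t => (hF t).differentiableAt) (fun t => (hF t).deriv) t 0
  rw [zero_pow two_ne_zero, mul_zero, exp_zero, mul_one] at this
  rw [← this, mul_assoc, ← exp_add, add_neg_cancel, exp_zero, mul_one]

theorem poincare_mixed_left_of_lt {u : ℝ → ℝ} {c d k : ℝ} (hcd : c ≤ d) (hu : ContDiff ℝ 1 u)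
    (hc : u c = 0) (hk : 0 < k) (hkd : k * (d - c) < π / 2) :
    k ^ 2 * ∫ y in c..d, u y ^ 2 ≤ ∫ y in c..d, deriv u y ^ 2 := by
  -- `ρ = k cot θ` with `θ y = k (y - d) + π / 2 ∈ (0, π / 2]` solves `ρ' = -k² - ρ²`, which turns
  -- `u'² - k² u²` into `(u' - ρ u)² + (ρ u²)'`; the boundary term `ρ u²` vanishes at both ends.
  -- Since `k (d - c) < π / 2`, `θ` stays away from `0` and `ρ` is regular on `[c, d]`.
  set θ : ℝ → ℝ := fun y => k * (y - d) + π / 2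
  have hθ : ∀ y ∈ Icc c d, 0 < θ y ∧ θ y ≤ π / 2 := fun y hy =>
    ⟨by simp only [θ]; nlinarith [hy.1], by simp only [θ]; nlinarith [hy.2]⟩
  have hsin : ∀ y ∈ Icc c d, 0 < sin (θ y) := fun y hy =>
    sin_pos_of_pos_of_lt_pi (hθ y hy).1 (by linarith [(hθ y hy).2, pi_pos])
  have hu' : ∀ y, HasDerivAt u (deriv u y) y :=
    fun y => (hu.differentiable one_ne_zero y).hasDerivAt
  set F : ℝ → ℝ := fun y => k * (cos (θ y) / sin (θ y)) * u y ^ 2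
  set F' : ℝ → ℝ := fun y =>
    -k ^ 2 / sin (θ y) ^ 2 * u y ^ 2 + k * (cos (θ y) / sin (θ y)) * (2 * u y * deriv u y)
  have hF : ∀ y ∈ Icc c d, HasDerivAt F (F' y) y := by
    intro y hy
    have hθ' : HasDerivAt θ k y := by
      have := (((hasDerivAt_id' y).sub_const d).const_mul k).add_const (π / 2)
      rwa [mul_one] at this
    have hcot := (((hasDerivAt_cos (θ y)).comp y hθ').fun_div ((hasDerivAt_sin (θ y)).comp y hθ')
      (hsin y hy).ne').const_mul k
    refine (hcot.fun_mul ((hu' y).fun_pow 2)).congr_deriv ?_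
    have hs := (hsin y hy).ne'
    simp only [Function.comp_apply, F']
    field_simp
    linear_combination (-k * u y ^ 2) * sin_sq_add_cos_sq (θ y)
  have hF'_le : ∀ y ∈ Icc c d, F' y ≤ deriv u y ^ 2 - k ^ 2 * u y ^ 2 := by
    intro y hy
    have hs := (hsin y hy).ne'
    have hsq : deriv u y ^ 2 - k ^ 2 * u y ^ 2 - F' y
        = (deriv u y - k * (cos (θ y) / sin (θ y)) * u y) ^ 2 := by
      simp only [F']
      field_simp
      linear_combination (-(k ^ 2) * u y ^ 2) * sin_sq_add_cos_sq (θ y)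
    linarith [hsq ▸ sq_nonneg (deriv u y - k * (cos (θ y) / sin (θ y)) * u y)]
  have hFc : F c = 0 := by simp [F, hc]
  have hFd : F d = 0 := by simp [F, θ]
  have hcont : Continuous fun y => deriv u y ^ 2 - k ^ 2 * u y ^ 2 :=
    ((hu.continuous_deriv le_rfl).pow 2).sub (continuous_const.mul (hu.continuous.pow 2))
  have := intervalIntegral.sub_le_integral_of_hasDeriv_right_of_le hcd
    (fun y hy => (hF y hy).continuousAt.continuousWithinAt)
    (fun y hy => (hF y (Ioo_subset_Icc_self hy)).hasDerivWithinAt)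
    hcont.integrableOn_Icc (fun y hy => hF'_le y (Ioo_subset_Icc_self hy))
  rw [hFc, hFd, intervalIntegral.integral_sub, intervalIntegral.integral_const_mul] at this
  · linarith
  · exact ((hu.continuous_deriv le_rfl).pow 2).intervalIntegrable _ _
  · exact (continuous_const.mul (hu.continuous.pow 2)).intervalIntegrable _ _

theorem poincare_mixed_left {u : ℝ → ℝ} {c d : ℝ} (hcd : c < d) (hu : ContDiff ℝ 1 u)
    (hc : u c = 0) :
    (π / (2 * (d - c))) ^ 2 * ∫ y in c..d, u y ^ 2 ≤ ∫ y in c..d, deriv u y ^ 2 := by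
  set K := π / (2 * (d - c))
  have hK : 0 < K := div_pos pi_pos (by linarith)
  refine le_of_tendsto (((continuous_pow 2).mul continuous_const).continuousAt.tendsto.mono_left
    (nhdsWithin_le_nhds (s := Iio K))) ?_
  filter_upwards [Ioo_mem_nhdsLT hK] with k hk
  refine poincare_mixed_left_of_lt hcd.le hu hc hk.1 ?_
  calc k * (d - c) < K * (d - c) := by gcongr; linarith [hk.2]
    _ = π / 2 := by simp only [K]; field_simp [sub_ne_zero.2 hcd.ne']

theorem poincare_mixed_right {u : ℝ → ℝ} {c d : ℝ} (hcd : c < d) (hu : ContDiff ℝ 1 u)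
    (hd : u d = 0) :
    (π / (2 * (d - c))) ^ 2 * ∫ y in c..d, u y ^ 2 ≤ ∫ y in c..d, deriv u y ^ 2 := by
  have := poincare_mixed_left (neg_lt_neg hcd) (hu.comp contDiff_neg) (by simpa using hd)
  simp only [Function.comp_def, deriv_comp_neg, neg_sq] at this
  rwa [intervalIntegral.integral_comp_neg (fun y => u y ^ 2),
    intervalIntegral.integral_comp_neg (fun y => deriv u y ^ 2), neg_neg, neg_neg,
    neg_sub_neg] at this

theorem poincare_dirichlet {u : ℝ → ℝ} {c d : ℝ} (hcd : c < d) (hu : ContDiff ℝ 1 u)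
    (hc : u c = 0) (hd : u d = 0) :
    (π / (d - c)) ^ 2 * ∫ y in c..d, u y ^ 2 ≤ ∫ y in c..d, deriv u y ^ 2 := by
  obtain ⟨m, hcm, hmd, hm⟩ : ∃ m, c < m ∧ m < d ∧ m = (c + d) / 2 :=
    ⟨_, by linarith, by linarith, rfl⟩
  have hleft := poincare_mixed_left hcm hu hc
  have hright := poincare_mixed_right hmd hu hd
  have hm₁ : 2 * (m - c) = d - c := by rw [hm]; ring
  have hm₂ : 2 * (d - m) = d - c := by rw [hm]; ring
  rw [hm₁] at hleft
  rw [hm₂] at hright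
  have hsq := (hu.continuous.fun_pow 2).intervalIntegrable (μ := volume)
  have hdsq := ((hu.continuous_deriv le_rfl).fun_pow 2).intervalIntegrable (μ := volume)
  rw [← intervalIntegral.integral_add_adjacent_intervals (hsq c m) (hsq m d),
    ← intervalIntegral.integral_add_adjacent_intervals (hdsq c m) (hdsq m d)]
  linarith

theorem integral_deriv_add_mul_id_mul_sq {φ : ℝ → ℝ} (hφ : ContDiff ℝ 1 φ)
    (hφ2 : Integrable fun y => φ y ^ 2) (hφ'2 : Integrable fun y => deriv φ y ^ 2)
    (hyφ2 : Integrable fun y => (y * φ y) ^ 2) (c : ℝ) :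
    ∫ y, (deriv φ y + c * (y * φ y)) ^ 2
      = (∫ y, deriv φ y ^ 2) + c ^ 2 * (∫ y, (y * φ y) ^ 2) - c * ∫ y, φ y ^ 2 := by
  -- completing the square leaves `c (y φ²)'`, whose integral vanishes as `y φ²` is integrable
  have := hφ.continuous
  have := hφ.continuous_deriv le_rfl
  set g' : ℝ → ℝ := fun y => φ y ^ 2 + y * (2 * φ y * deriv φ y)
  have hg : ∀ y, HasDerivAt (fun y => y * φ y ^ 2) (g' y) y := fun y => by
    have := (hasDerivAt_id' y).fun_mul
      (((hφ.differentiable one_ne_zero y).hasDerivAt).fun_pow 2)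
    refine this.congr_deriv ?_
    norm_num [g']
  have hg'_int : Integrable g' := by
    refine Integrable.mono' (hφ2.add (hyφ2.add hφ'2)) (by fun_prop) (ae_of_all _ fun y => ?_)
    simp only [Pi.add_apply, g', norm_eq_abs, abs_le]
    constructor <;> nlinarith [sq_nonneg (y * φ y + deriv φ y), sq_nonneg (y * φ y - deriv φ y)]
  have hg_int : Integrable fun y => y * φ y ^ 2 := by
    refine Integrable.mono' (hyφ2.add hφ2) (by fun_prop) (ae_of_all _ fun y => ?_)
    simp only [Pi.add_apply, norm_eq_abs, abs_le]
    constructor <;> nlinarith [sq_nonneg (y * φ y + φ y), sq_nonneg (y * φ y - φ y)]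
  have hpt : (fun y => (deriv φ y + c * (y * φ y)) ^ 2)
      = fun y => deriv φ y ^ 2 + c ^ 2 * (y * φ y) ^ 2 - c * φ y ^ 2 + c * g' y := by
    ext y
    simp only [g']
    ring
  have i₁ : Integrable fun y => deriv φ y ^ 2 + c ^ 2 * (y * φ y) ^ 2 :=
    hφ'2.add (hyφ2.const_mul _)
  have i₂ : Integrable fun y => deriv φ y ^ 2 + c ^ 2 * (y * φ y) ^ 2 - c * φ y ^ 2 :=
    i₁.sub (hφ2.const_mul _)
  rw [hpt, integral_add i₂ (hg'_int.const_mul c), integral_sub i₁ (hφ2.const_mul c),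
    integral_add hφ'2 (hyφ2.const_mul _), integral_const_mul, integral_const_mul, integral_const_mul,
    integral_eq_zero_of_hasDerivAt_of_integrable hg hg'_int hg_int]
  ring

theorem volume_restrict_strip (a : ℝ) :
    volume.restrict (strip a) = volume.prod (volume.restrict (Ioo (-a) a)) := by
  rw [strip, Measure.volume_eq_prod, ← Measure.prod_restrict, Measure.restrict_univ]

theorem isOpen_strip (a : ℝ) : IsOpen (strip a) := isOpen_univ.prod isOpen_Ioo

theorem closure_strip {a : ℝ} (ha : 0 < a) : closure (strip a) = univ ×ˢ Icc (-a) a := by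
  rw [strip, closure_prod_eq, closure_univ, closure_Ioo (by linarith)]

theorem integral_strip_sq_of_eq_mul {a : ℝ} (ha : 0 ≤ a) {f : ℝ × ℝ → ℝ} {φ ψ : ℝ → ℝ}
    (hf : ∀ p ∈ strip a, f p = φ p.1 * ψ p.2) :
    ∫ p in strip a, f p ^ 2 = (∫ x, φ x ^ 2) * ∫ y in -a..a, ψ y ^ 2 := by
  rw [setIntegral_congr_fun (isOpen_strip a).measurableSet
      (g := fun p => φ p.1 ^ 2 * ψ p.2 ^ 2) fun p hp => by simp only [hf p hp, mul_pow],
    volume_restrict_strip, integral_prod_mul (fun x => φ x ^ 2) (fun y => ψ y ^ 2),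
    integral_Ioo_eq_intervalIntegral (neg_le_self ha)]

section

variable {a : ℝ} {v : ℝ × ℝ → ℝ}

theorem hasDerivAt_pd1 (hv : Differentiable ℝ v) (p : ℝ × ℝ) :
    HasDerivAt (fun t => v (t, p.2)) (pd1 v p) p.1 :=
  ((hv.comp (differentiable_id.prodMk (differentiable_const _))) p.1).hasDerivAt

theorem continuous_pd1 (hv : ContDiff ℝ 1 v) : Continuous (pd1 v) := by
  have hd := hv.differentiable one_ne_zero
  have : pd1 v = fun p => fderiv ℝ v p (1, 0) := funext fun p =>
    (hasDerivAt_pd1 hd p).deriv.symm.trans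
      (((hd p).hasFDerivAt.comp_hasDerivAt p.1 ((hasDerivAt_id p.1).prodMk
        (hasDerivAt_const p.1 p.2))).deriv)
  rw [this]
  exact (hv.continuous_fderiv one_ne_zero).clm_apply continuous_const

theorem poincare_strip (ha : 0 < a) (hv : ContDiff ℝ 1 v)
    (hv2 : IntegrableOn (fun p => v p ^ 2) (strip a))
    (hpd2 : IntegrableOn (fun p => pd2 v p ^ 2) (strip a))
    (hleft : ∀ y1 < 0, v (y1, -a) = 0) (hright : ∀ y1 > 0, v (y1, a) = 0) :
    (π / (4 * a)) ^ 2 * ∫ p in strip a, v p ^ 2 ≤ ∫ p in strip a, pd2 v p ^ 2 := by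
  rw [IntegrableOn, volume_restrict_strip] at hv2 hpd2
  rw [volume_restrict_strip, integral_prod _ hv2, integral_prod _ hpd2, ← integral_const_mul]
  refine integral_mono_ae (hv2.integral_prod_left.const_mul _) hpd2.integral_prod_left ?_
  filter_upwards [compl_mem_ae_iff.2 (Real.volume_singleton (a := 0))] with y1 hy1
  have hslice : ContDiff ℝ 1 fun t => v (y1, t) := hv.comp (contDiff_const.prodMk contDiff_id)
  have hconst : π / (4 * a) = π / (2 * (a - -a)) := by ring_nf
  simp only [integral_Ioo_eq_intervalIntegral (neg_le_self ha.le), hconst]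
  rcases lt_or_gt_of_ne (show y1 ≠ 0 from hy1) with hneg | hpos
  · exact poincare_mixed_left (neg_lt_self ha) hslice (hleft y1 hneg)
  · exact poincare_mixed_right (neg_lt_self ha) hslice (hright y1 hpos)

theorem integrable_pd1_add_mul_sq {μ : Measure (ℝ × ℝ)} (hv : ContDiff ℝ 1 v)
    (hpd1 : Integrable (fun p => pd1 v p ^ 2) μ)
    (hyv : Integrable (fun p : ℝ × ℝ => (p.1 * v p) ^ 2) μ) (c : ℝ) :
    Integrable (fun p => (pd1 v p + c * (p.1 * v p)) ^ 2) μ := by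
  refine Integrable.mono' ((hpd1.const_mul 2).add (hyv.const_mul (2 * c ^ 2)))
    (by have := continuous_pd1 hv; have := hv.continuous; fun_prop) (ae_of_all _ fun p => ?_)
  simp only [Pi.add_apply, norm_eq_abs, abs_pow, sq_abs]
  nlinarith [sq_nonneg (pd1 v p - c * (p.1 * v p))]

theorem integral_pd1_add_mul_sq {ν : Measure ℝ} [SFinite ν] (hv : ContDiff ℝ 1 v)
    (hv2 : Integrable (fun p => v p ^ 2) (volume.prod ν))
    (hpd1 : Integrable (fun p => pd1 v p ^ 2) (volume.prod ν))
    (hyv : Integrable (fun p : ℝ × ℝ => (p.1 * v p) ^ 2) (volume.prod ν)) (c : ℝ) :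
    ∫ p, (pd1 v p + c * (p.1 * v p)) ^ 2 ∂(volume.prod ν)
      = (∫ p, pd1 v p ^ 2 ∂(volume.prod ν)) + c ^ 2 * (∫ p, (p.1 * v p) ^ 2 ∂(volume.prod ν))
        - c * ∫ p, v p ^ 2 ∂(volume.prod ν) := by
  have hQ := integrable_pd1_add_mul_sq hv hpd1 hyv c
  have hslices : (fun y => ∫ x, (pd1 v (x, y) + c * (x * v (x, y))) ^ 2) =ᵐ[ν]
      fun y => (∫ x, pd1 v (x, y) ^ 2) + c ^ 2 * (∫ x, (x * v (x, y)) ^ 2)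
        - c * ∫ x, v (x, y) ^ 2 := by
    filter_upwards [hv2.prod_left_ae, hpd1.prod_left_ae, hyv.prod_left_ae] with y h₁ h₂ h₃
    exact integral_deriv_add_mul_id_mul_sq (hv.comp (contDiff_id.prodMk contDiff_const)) h₁ h₂ h₃ c
  have i₁ : Integrable (fun y => ∫ x, pd1 v (x, y) ^ 2) ν := hpd1.integral_prod_right
  have i₂ : Integrable (fun y => (∫ x, pd1 v (x, y) ^ 2) + c ^ 2 * ∫ x, (x * v (x, y)) ^ 2) ν :=
    i₁.add (hyv.integral_prod_right.const_mul _)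
  rw [integral_prod_symm _ hQ, integral_prod_symm _ hpd1, integral_prod_symm _ hyv,
    integral_prod_symm _ hv2, integral_congr_ae hslices,
    integral_sub i₂ (hv2.integral_prod_right.const_mul _),
    integral_add i₁ (hyv.integral_prod_right.const_mul _), integral_const_mul, integral_const_mul]

theorem eq_mul_exp_of_pd1_add_mul_eq_zero (ha : 0 < a) (hv : ContDiff ℝ 1 v) {c : ℝ}
    (hQ : ∀ p ∈ strip a, pd1 v p + c * (p.1 * v p) = 0) (y1 : ℝ) {y2 : ℝ}
    (hy2 : y2 ∈ Icc (-a) a) : v (y1, y2) = v (0, y2) * exp (-(c / 2 * y1 ^ 2)) := by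
  have hclosed : IsClosed {p : ℝ × ℝ | pd1 v p + c * (p.1 * v p) = 0} :=
    isClosed_eq (by have := continuous_pd1 hv; have := hv.continuous; fun_prop) continuous_const
  have hQ' : ∀ t, pd1 v (t, y2) + c * (t * v (t, y2)) = 0 := fun t =>
    hclosed.closure_subset_iff.2 hQ (by rw [closure_strip ha]; exact ⟨mem_univ t, hy2⟩)
  refine eq_mul_exp_of_hasDerivAt (f := fun t => v (t, y2)) (fun t => ?_) y1
  rw [← add_eq_zero_iff_eq_neg.1 (hQ' t)]
  exact hasDerivAt_pd1 (hv.differentiable one_ne_zero) (t, y2)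

theorem poincare_strip_of_eq_mul (ha : 0 < a) {G g : ℝ → ℝ} (hg : ContDiff ℝ 1 g)
    (hga : g (-a) = 0) (hgb : g a = 0) (hsep : ∀ y1, ∀ y2 ∈ Icc (-a) a, v (y1, y2) = G y1 * g y2) :
    (π / (2 * a)) ^ 2 * ∫ p in strip a, v p ^ 2 ≤ ∫ p in strip a, pd2 v p ^ 2 := by
  have hpd2 : ∀ p ∈ strip a, pd2 v p = G p.1 * deriv g p.2 := by
    rintro ⟨y1, y2⟩ ⟨-, hy2⟩
    have hnear : (fun t => v (y1, t)) =ᶠ[nhds y2] fun t => G y1 * g t :=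
      Filter.eventually_of_mem (Icc_mem_nhds hy2.1 hy2.2) (hsep y1)
    exact hnear.deriv_eq.trans (deriv_const_mul _ (hg.differentiable one_ne_zero y2))
  rw [integral_strip_sq_of_eq_mul ha.le fun p hp => hsep p.1 p.2 (Ioo_subset_Icc_self hp.2),
    integral_strip_sq_of_eq_mul ha.le hpd2, mul_left_comm]
  refine mul_le_mul_of_nonneg_left ?_ (integral_nonneg fun _ => sq_nonneg _)
  have := poincare_dirichlet (neg_lt_self ha) hg hga hgb
  rwa [sub_neg_eq_add, ← two_mul] at this

theorem eq_zero_of_pd1_add_mul_eq_zero_of_pd2_le (ha : 0 < a) (hv : ContDiff ℝ 1 v)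
    (hv2 : IntegrableOn (fun p => v p ^ 2) (strip a))
    (hleft : ∀ y1 < 0, v (y1, -a) = 0) (hright : ∀ y1 > 0, v (y1, a) = 0) {c : ℝ}
    (hQ : ∀ p ∈ strip a, pd1 v p + c * (p.1 * v p) = 0)
    (hpd2 : ∫ p in strip a, pd2 v p ^ 2 ≤ (π / (4 * a)) ^ 2 * ∫ p in strip a, v p ^ 2) :
    ∀ p ∈ strip a, v p = 0 := by
  set g : ℝ → ℝ := fun t => v (0, t)
  have hsep : ∀ y1, ∀ y2 ∈ Icc (-a) a, v (y1, y2) = exp (-(c / 2 * y1 ^ 2)) * g y2 :=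
    fun y1 y2 hy2 => by rw [mul_comm]; exact eq_mul_exp_of_pd1_add_mul_eq_zero ha hv hQ y1 hy2
  have hga : g (-a) = 0 := by
    have := hsep (-1) (-a) (left_mem_Icc.2 (by linarith))
    rw [hleft _ (by norm_num)] at this
    exact (mul_eq_zero.1 this.symm).resolve_left (exp_pos _).ne'
  have hgb : g a = 0 := by
    have := hsep 1 a (right_mem_Icc.2 (by linarith))
    rw [hright _ (by norm_num)] at this
    exact (mul_eq_zero.1 this.symm).resolve_left (exp_pos _).ne'
  have hdir := poincare_strip_of_eq_mul ha (hv.comp (contDiff_const.prodMk contDiff_id)) hga hgb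
    hsep
  have hconst : (π / (2 * a)) ^ 2 = 4 * (π / (4 * a)) ^ 2 := by field_simp; ring
  have hE : 0 < (π / (4 * a)) ^ 2 := by positivity
  have hzero : ∫ p in strip a, v p ^ 2 = 0 := by
    have := setIntegral_nonneg (μ := volume) (isOpen_strip a).measurableSet
      fun p _ => sq_nonneg (v p)
    nlinarith
  exact eqOn_zero_of_setIntegral_sq_eq_zero (isOpen_strip a) hv.continuous.continuousOn hv2 hzero

end

/-- For every `s ≥ 0`, the lowest eigenvalue `μ_π(s)` of the twisted operator `T̂_πˢ`
is strictly greater than `1/4`: on the twisted form domain one has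
`Ĵ_πˢ[v] ≥ (1/4)‖v‖²`, and if `Ĵ_πˢ[v] = (1/4)‖v‖²` then `v = 0`. -/
theorem twisted_lowest_eigenvalue_strict (a : ℝ) (ha : 0 < a) :
    ∀ s : ℝ, 0 ≤ s →
      ∀ v : ℝ × ℝ → ℝ, ContDiff ℝ 1 v →
        IntegrableOn (fun p => (v p) ^ 2) (strip a) →
        IntegrableOn (fun p => (pd1 v p) ^ 2) (strip a) →
        IntegrableOn (fun p => (pd2 v p) ^ 2) (strip a) →
        IntegrableOn (fun p : ℝ × ℝ => (p.1 * v p) ^ 2) (strip a) →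
        (∀ y1 : ℝ, y1 < 0 → v (y1, -a) = 0) →
        (∀ y1 : ℝ, 0 < y1 → v (y1, a) = 0) →
        (1 / 4) * (∫ p in strip a, (v p) ^ 2) ≤ Jhat a s v ∧
        (Jhat a s v = (1 / 4) * (∫ p in strip a, (v p) ^ 2) →
          ∀ p ∈ strip a, v p = 0) := by
  intro s _ v hv hv2 hpd1 hpd2 hyv hleft hright
  have hQ_int : IntegrableOn (fun p => (pd1 v p + 1 / 4 * (p.1 * v p)) ^ 2) (strip a) :=
    integrable_pd1_add_mul_sq hv hpd1 hyv _
  have hQ : ∫ p in strip a, (pd1 v p + 1 / 4 * (p.1 * v p)) ^ 2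
      = (∫ p in strip a, pd1 v p ^ 2) + (1 / 4) ^ 2 * (∫ p in strip a, (p.1 * v p) ^ 2)
        - 1 / 4 * ∫ p in strip a, v p ^ 2 := by
    rw [IntegrableOn, volume_restrict_strip] at hv2 hpd1 hyv
    rw [volume_restrict_strip]
    exact integral_pd1_add_mul_sq hv hv2 hpd1 hyv _
  have hQ_nonneg : 0 ≤ ∫ p in strip a, (pd1 v p + 1 / 4 * (p.1 * v p)) ^ 2 :=
    integral_nonneg fun _ => sq_nonneg _
  set D := (∫ p in strip a, pd2 v p ^ 2) - (π / (4 * a)) ^ 2 * ∫ p in strip a, v p ^ 2 with hD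
  have hD_nonneg : 0 ≤ D := sub_nonneg.2 (poincare_strip ha hv hv2 hpd2 hleft hright)
  have hJ : Jhat a s v - 1 / 4 * ∫ p in strip a, v p ^ 2
      = (∫ p in strip a, (pd1 v p + 1 / 4 * (p.1 * v p)) ^ 2) + exp s * D := by
    rw [Jhat, hQ, hD]; ring
  have hJ_nonneg := mul_nonneg (exp_pos s).le hD_nonneg
  refine ⟨by linarith, fun hJ_eq =>
    eq_zero_of_pd1_add_mul_eq_zero_of_pd2_le ha hv hv2 hleft hright (c := 1 / 4) ?_ ?_⟩
  · exact eqOn_zero_of_setIntegral_sq_eq_zero (isOpen_strip a)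
      (by have := continuous_pd1 hv; have := hv.continuous; fun_prop) hQ_int (by linarith)
  · have := (mul_eq_zero.1 (show exp s * D = 0 by linarith)).resolve_left (exp_pos s).ne'
    linarith
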